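/- Under the setup of the series h_i(x) = Σ_{n≥1} λ^n (f̂(τ_{i,n}(x)) − f̂(τ_{i,n}(0))) for i ∈ Σ_d: for any i, j, k ∈ Σ_d, h_i ≡ h_j implies h_{i+k} ≡ h_{j+k}, where + denotes d-adic addition on Σ_d. Consequently G_0 := {i ∈ Σ_d : h_i ≡ h_0} is a closed subgroup of Σ_d. -/

import Mathlib

/-- `i_1 + i_2 d + ⋯ + i_n d^(n-1)` for a digit sequence `i` (digits indexed from 0). -/
def dVal (d : ℕ) (i : ℕ → Fin d) (n : ℕ) : ℕ :=
  ∑ m ∈ Finset.range n, (i m : ℕ) * d ^ m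

/-- Iterated inverse branches `τ_{i,n} = τ_{i_n} ∘ ⋯ ∘ τ_{i_1}`, `τ_j(x) = τ(x+j)`. -/
def tauIt (tau : ℝ → ℝ) (i : ℕ → ℕ) : ℕ → ℝ → ℝ
  | 0 => id
  | n + 1 => fun x => tau (tauIt tau i n x + i n)

/-- `h_i(x) = Σ_{n≥1} λⁿ (f̂(τ_{i,n}(x)) − f̂(τ_{i,n}(0)))`. -/
noncomputable def hFun (tau : ℝ → ℝ) (fhat : ℝ → ℂ) (lam : ℂ) (i : ℕ → ℕ) (x : ℝ) : ℂ :=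
  ∑' n : ℕ, lam ^ (n + 1) *
    (fhat (tauIt tau i (n + 1) x) - fhat (tauIt tau i (n + 1) 0))

/-!
Write `τ_{i,n}(x) = τⁿ(x + aₙ(i))` with `aₙ(i) = i₁ + i₂ d + ⋯ + iₙ dⁿ⁻¹`. Since
`τⁿ(y + dⁿ k) = τⁿ(y) + k` and `f̂` is 1-periodic, the series `h_i` depends on the anchors
`aₙ(i)` only modulo `dⁿ`, so `h_{i+k}` is the series with anchors `aₙ(i) + aₙ(k)`. Hölder
continuity of `f̂` and the contraction of `τⁿ` make this series converge uniformly, hence it is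
continuous in `k`. For `k = ι(m)` (`digitSeq d m`) the anchors become `aₙ(i) + m`, which gives
`h_{i+ι(m)}(x) = h_i(x + m) - h_i(m)`: a function of `h_i` alone. Density of `ι(ℕ)` in `Σ_d`
finishes the proof; `G₀` is closed because each `i ↦ h_i(x)` is continuous.
-/

open scoped NNReal

section Digits

variable {d : ℕ}

lemma dVal_succ (i : ℕ → Fin d) (n : ℕ) : dVal d i (n + 1) = dVal d i n + i n * d ^ n :=
  Finset.sum_range_succ _ n

lemma dVal_lt (i : ℕ → Fin d) (n : ℕ) : dVal d i n < d ^ n := by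
  induction n with
  | zero => simp [dVal]
  | succ n ih =>
    have := Nat.mul_le_mul_right (d ^ n) (i n).isLt
    rw [dVal_succ, pow_succ]
    nlinarith

lemma dVal_mod_pow (i : ℕ → Fin d) {m n : ℕ} (h : m ≤ n) : dVal d i n % d ^ m = dVal d i m := by
  induction n, h using Nat.le_induction with
  | base => exact Nat.mod_eq_of_lt (dVal_lt i m)
  | succ n hmn ih =>
    rw [dVal_succ, ← pow_mul_pow_sub d hmn, ← mul_assoc, mul_comm _ (d ^ m), mul_assoc,
      Nat.add_mul_mod_self_left, ih]

lemma digit_eq_of_dVal_succ_eq {i j : ℕ → Fin d} {n : ℕ}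
    (h : dVal d i (n + 1) = dVal d j (n + 1)) : i n = j n := by
  have hn : dVal d i n = dVal d j n := by
    rw [← dVal_mod_pow i n.le_succ, h, dVal_mod_pow j n.le_succ]
  rw [dVal_succ, dVal_succ, hn, Nat.add_left_cancel_iff] at h
  exact Fin.ext (Nat.eq_of_mul_eq_mul_right (pow_pos (i n).pos _) h)

lemma eq_of_dVal_modEq {i j : ℕ → Fin d} (h : ∀ n, dVal d i n ≡ dVal d j n [MOD d ^ n]) :
    i = j :=
  funext fun n => digit_eq_of_dVal_succ_eq <| by
    simpa only [Nat.ModEq, Nat.mod_eq_of_lt (dVal_lt _ _)] using h (n + 1)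

lemma continuous_dVal (n : ℕ) : Continuous fun i : ℕ → Fin d => dVal d i n :=
  continuous_finsetSum _ fun m _ =>
    (continuous_of_discreteTopology.comp (continuous_apply m)).mul continuous_const

def digitSeq (d : ℕ) [NeZero d] (m : ℕ) : ℕ → Fin d := fun n => Fin.ofNat d (m / d ^ n)

variable [NeZero d]

lemma dVal_digitSeq (m n : ℕ) : dVal d (digitSeq d m) n = m % d ^ n := by
  induction n with
  | zero => simp [dVal, Nat.mod_one]
  | succ n ih =>
    rw [dVal_succ, ih, pow_succ, Nat.mod_mul]
    simp [digitSeq, Fin.ofNat, mul_comm]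

lemma denseRange_digitSeq : DenseRange (digitSeq d) := fun k =>
  mem_closure_of_tendsto (f := fun N => digitSeq d (dVal d k N))
    (tendsto_pi_nhds.2 fun n => tendsto_const_nhds.congr' <|
      Filter.eventually_atTop.2 ⟨n + 1, fun N hN =>
        digit_eq_of_dVal_succ_eq (i := k) (j := digitSeq d (dVal d k N)) <| by
          rw [dVal_digitSeq, dVal_mod_pow k hN]⟩)
    (Filter.Eventually.of_forall fun N => ⟨_, rfl⟩)

end Digits

section ShiftSeries

variable {g : ℕ → ℝ → ℂ} {c : ℕ → ℝ≥0} {α : ℝ≥0}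

noncomputable def shiftSeries (g : ℕ → ℝ → ℂ) (a : ℕ → ℝ) (x : ℝ) : ℂ :=
  ∑' n, (g n (x + a n) - g n (a n))

lemma norm_sub_le_of_holderWith (hg : ∀ n, HolderWith (c n) α (g n)) (n : ℕ) (a x : ℝ) :
    ‖g n (x + a) - g n a‖ ≤ c n * |x| ^ (α : ℝ) := by
  simpa [dist_eq_norm, Real.dist_eq] using (hg n).dist_le (x + a) a

lemma summable_shift (hg : ∀ n, HolderWith (c n) α (g n)) (hc : Summable c) (a : ℕ → ℝ)
    (x : ℝ) : Summable fun n => g n (x + a n) - g n (a n) :=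
  .of_norm_bounded ((NNReal.summable_coe.2 hc).mul_right _)
    fun n => norm_sub_le_of_holderWith hg n (a n) x

lemma continuous_shiftSeries (hα : 0 < α) (hg : ∀ n, HolderWith (c n) α (g n))
    (hc : Summable c) (x : ℝ) : Continuous fun a : ℕ → ℝ => shiftSeries g a x :=
  continuous_tsum
    (fun n => (((hg n).continuous hα).comp (continuous_const.add (continuous_apply n))).sub
      (((hg n).continuous hα).comp (continuous_apply n)))
    ((NNReal.summable_coe.2 hc).mul_right _) fun n a => norm_sub_le_of_holderWith hg n (a n) x

lemma shiftSeries_add_sub (hg : ∀ n, HolderWith (c n) α (g n)) (hc : Summable c)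
    (a : ℕ → ℝ) (x y : ℝ) :
    shiftSeries g a (x + y) - shiftSeries g a y = shiftSeries g (fun n => y + a n) x := by
  rw [shiftSeries, shiftSeries, ← (summable_shift hg hc a _).tsum_sub (summable_shift hg hc a _)]
  congr 1 with n
  rw [add_assoc, sub_sub_sub_cancel_right]

lemma shiftSeries_congr {a b : ℕ → ℝ} (h : ∀ n y, g n (y + a n) = g n (y + b n)) :
    shiftSeries g a = shiftSeries g b := by
  ext x
  have h0 n : g n (a n) = g n (b n) := by simpa using h n 0
  simp only [shiftSeries, h, h0]

end ShiftSeries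

section InverseBranches

variable {d : ℕ} {tau : ℝ → ℝ} (htau : ∀ x, tau (x + d) = tau x + 1)
include htau

lemma tau_add_natCast_mul (x : ℝ) (k : ℕ) : tau (x + d * k) = tau x + k := by
  induction k with
  | zero => simp
  | succ k ih =>
    rw [Nat.cast_succ, mul_add_one, ← add_assoc, htau, ih, add_assoc]

lemma iterate_tau_add_pow_mul (n k : ℕ) (x : ℝ) : tau^[n] (x + d ^ n * k) = tau^[n] x + k := by
  induction n generalizing k with
  | zero => simp
  | succ n ih =>
    have := ih (d * k)
    push_cast at this
    rw [Function.iterate_succ_apply', Function.iterate_succ_apply', pow_succ, mul_assoc, this,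
      tau_add_natCast_mul htau]

lemma tauIt_eq_iterate (i : ℕ → Fin d) (n : ℕ) (x : ℝ) :
    tauIt tau (fun m => i m) n x = tau^[n] (x + dVal d i n) := by
  induction n with
  | zero => simp [tauIt, dVal]
  | succ n ih =>
    dsimp only [tauIt]
    rw [ih, Function.iterate_succ_apply', dVal_succ, Nat.cast_add, ← add_assoc, Nat.cast_mul,
      Nat.cast_pow, mul_comm, iterate_tau_add_pow_mul htau]

lemma periodic_comp_iterate_tau_add_natCast {f : ℝ → ℂ} (hf : Function.Periodic f 1)
    (n a : ℕ) (y : ℝ) : f (tau^[n] (y + a)) = f (tau^[n] (y + (a % d ^ n : ℕ))) := by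
  conv_lhs => rw [← Nat.mod_add_div a (d ^ n)]
  push_cast
  rw [← add_assoc, iterate_tau_add_pow_mul htau]
  simpa using hf.nat_mul (a / d ^ n) _

end InverseBranches

noncomputable def branchTerm (tau : ℝ → ℝ) (fhat : ℝ → ℂ) (lam : ℂ) (n : ℕ) (y : ℝ) : ℂ :=
  lam ^ (n + 1) * fhat (tau^[n + 1] y)

section Translation

variable {d : ℕ} {tau : ℝ → ℝ} {fhat : ℝ → ℂ} {lam : ℂ}

lemma continuous_dVal_succ_cast :
    Continuous fun (i : ℕ → Fin d) (n : ℕ) => (dVal d i (n + 1) : ℝ) :=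
  continuous_pi fun n => continuous_of_discreteTopology.comp (continuous_dVal (n + 1))

variable (htau : ∀ x, tau (x + d) = tau x + 1)
include htau

lemma hFun_eq_shiftSeries (i : ℕ → Fin d) :
    hFun tau fhat lam (fun m => i m) =
      shiftSeries (branchTerm tau fhat lam) (fun n => dVal d i (n + 1)) := by
  ext x
  simp only [hFun, shiftSeries, branchTerm, tauIt_eq_iterate htau, zero_add, mul_sub]

lemma shiftSeries_branchTerm_eq_of_modEq (hf : Function.Periodic fhat 1) {a b : ℕ → ℕ}
    (h : ∀ n, a n ≡ b n [MOD d ^ (n + 1)]) :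
    shiftSeries (branchTerm tau fhat lam) (fun n => a n) =
      shiftSeries (branchTerm tau fhat lam) (fun n => b n) :=
  shiftSeries_congr fun n y => by
    rw [branchTerm, branchTerm, periodic_comp_iterate_tau_add_natCast htau hf _ (a n),
      periodic_comp_iterate_tau_add_natCast htau hf _ (b n), h n]

variable {c : ℕ → ℝ≥0} {α : ℝ≥0} (hα : 0 < α)
  (hg : ∀ n, HolderWith (c n) α (branchTerm tau fhat lam n)) (hc : Summable c)
include hα hg hc

lemma continuous_hFun_apply (x : ℝ) :
    Continuous fun i : ℕ → Fin d => hFun tau fhat lam (fun m => i m) x := by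
  simp only [hFun_eq_shiftSeries htau]
  exact (continuous_shiftSeries hα hg hc x).comp continuous_dVal_succ_cast

theorem hFun_add_right_eq [NeZero d] (hf : Function.Periodic fhat 1)
    {add : (ℕ → Fin d) → (ℕ → Fin d) → (ℕ → Fin d)}
    (hadd : ∀ i j n, dVal d (add i j) n ≡ dVal d i n + dVal d j n [MOD d ^ n])
    {i j : ℕ → Fin d}
    (hij : hFun tau fhat lam (fun m => i m) = hFun tau fhat lam (fun m => j m))
    (k : ℕ → Fin d) :
    hFun tau fhat lam (fun m => (add i k m : ℕ)) =
      hFun tau fhat lam (fun m => (add j k m : ℕ)) := by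
  let G (i k : ℕ → Fin d) : ℝ → ℂ := shiftSeries (branchTerm tau fhat lam)
    (fun n => (dVal d i (n + 1) : ℝ) + dVal d k (n + 1))
  have hG_add i : hFun tau fhat lam (fun m => (add i k m : ℕ)) = G i k := by
    rw [hFun_eq_shiftSeries htau]
    have := shiftSeries_branchTerm_eq_of_modEq (lam := lam) htau hf fun n => hadd i k (n + 1)
    push_cast at this
    exact this
  have hG_digitSeq i m x : G i (digitSeq d m) x =
      hFun tau fhat lam (fun l => i l) (x + m) - hFun tau fhat lam (fun l => i l) m := by
    have hmod : ∀ n, dVal d i (n + 1) + dVal d (digitSeq d m) (n + 1) ≡ m + dVal d i (n + 1)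
        [MOD d ^ (n + 1)] := fun n => by
      rw [dVal_digitSeq, add_comm m]
      exact (Nat.mod_modEq _ _).add_left _
    rw [hFun_eq_shiftSeries htau, shiftSeries_add_sub hg hc]
    have := shiftSeries_branchTerm_eq_of_modEq (lam := lam) htau hf hmod
    push_cast at this
    exact congrFun this x
  have hG_cont i x : Continuous fun k => G i k x :=
    (continuous_shiftSeries hα hg hc x).comp (continuous_const.add continuous_dVal_succ_cast)
  ext x
  rw [hG_add, hG_add]
  refine congrFun (denseRange_digitSeq.equalizer (hG_cont i x) (hG_cont j x) ?_) k
  ext m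
  simp only [Function.comp_apply, hG_digitSeq, hij]

end Translation

section Contraction

lemma mul_abs_sub_le_abs_sub_of_le_abs_deriv {g : ℝ → ℝ} (hg : Differentiable ℝ g) {c : ℝ}
    (hder : ∀ x, c ≤ |deriv g x|) (u v : ℝ) : c * |u - v| ≤ |g u - g v| := by
  wlog huv : u < v generalizing u v
  · rcases (not_lt.1 huv).eq_or_lt with rfl | hvu
    · simp
    · simpa only [abs_sub_comm] using this v u hvu
  obtain ⟨ξ, -, hξ⟩ := exists_deriv_eq_slope g huv hg.continuous.continuousOn hg.differentiableOn
  rw [eq_div_iff (sub_ne_zero.2 huv.ne')] at hξ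
  rw [abs_sub_comm u, abs_sub_comm (g u), ← hξ, abs_mul]
  exact mul_le_mul_of_nonneg_right (hder ξ) (abs_nonneg _)

lemma lipschitzWith_inv_of_le_abs_deriv {g σ : ℝ → ℝ} (hg : Differentiable ℝ g)
    (hσ : Function.LeftInverse g σ) {c : ℝ≥0} (hc : 0 < c) (hder : ∀ x, c ≤ |deriv g x|) :
    LipschitzWith c⁻¹ σ :=
  .of_dist_le_mul fun a b => by
    have := mul_abs_sub_le_abs_sub_of_le_abs_deriv hg hder (σ a) (σ b)
    rw [hσ, hσ] at this
    rw [Real.dist_eq, Real.dist_eq, NNReal.coe_inv, le_inv_mul_iff₀ (by exact_mod_cast hc)]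
    exact this

lemma lipschitzWith_iterate_of_iterate {X : Type*} [PseudoEMetricSpace X] {σ : X → X}
    (h1 : LipschitzWith 1 σ) {K : ℝ≥0} {N : ℕ} (hN : LipschitzWith K σ^[N]) (n : ℕ) :
    LipschitzWith (K ^ (n / N)) σ^[n] := by
  have := (hN.iterate (n / N)).comp (h1.iterate (n % N))
  rwa [one_pow, mul_one, ← Function.iterate_mul, ← Function.iterate_add, Nat.div_add_mod] at this

lemma summable_pow_mul_pow_div {a r : ℝ} (ha : 0 ≤ a) (hr : 0 ≤ r) {N : ℕ} (hN : 0 < N)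
    (h : a ^ N * r < 1) : Summable fun n : ℕ => a ^ n * r ^ (n / N) := by
  have : NeZero N := ⟨hN.ne'⟩
  rw [← (Nat.divModEquiv N).symm.summable_iff]
  have hs : Summable fun p : ℕ × Fin N => (a ^ N * r) ^ p.1 * a ^ (p.2 : ℕ) :=
    (summable_geometric_of_lt_one (by positivity) h).mul_of_nonneg
      (Summable.of_finite : Summable fun s : Fin N => a ^ (s : ℕ))
      (fun q => pow_nonneg (by positivity) q) fun s => pow_nonneg ha s
  refine hs.congr fun ⟨q, s⟩ => ?_
  have hdiv : (q * N + s) / N = q := by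
    rw [Nat.add_comm, Nat.add_mul_div_right _ _ hN, Nat.div_eq_of_lt s.2, Nat.zero_add]
  simp only [Function.comp_apply, Nat.divModEquiv_symm_apply, hdiv]
  ring

lemma exists_pow_lt_rpow_of_lt_iSup {s : ℕ → ℝ} (hs : ∀ n, 0 ≤ s n) {r α : ℝ} (hr : 0 ≤ r)
    (hα : 0 < α) (h : r < (⨆ n : ℕ, s n ^ ((n : ℝ) + 1)⁻¹) ^ α) :
    ∃ n, 0 < s n ∧ r ^ (n + 1) < s n ^ α := by
  have hS : 0 ≤ ⨆ n : ℕ, s n ^ ((n : ℝ) + 1)⁻¹ :=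
    Real.iSup_nonneg fun n => Real.rpow_nonneg (hs n) _
  obtain ⟨n, hn⟩ := exists_lt_of_lt_ciSup ((Real.rpow_inv_lt_iff_of_pos hr hS hα).2 h)
  have hroot : (r ^ α⁻¹) ^ ((n : ℝ) + 1) < s n :=
    (Real.lt_rpow_inv_iff_of_pos (by positivity) (hs n) (by positivity)).1 hn
  refine ⟨n, lt_of_le_of_lt (by positivity) hroot, ?_⟩
  rw [← Real.rpow_inv_lt_iff_of_pos (by positivity) (hs n) hα, ← Real.rpow_pow_comm hr]
  exact_mod_cast hroot

end Contraction

section Holder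

variable {That tau : ℝ → ℝ} (hT : Differentiable ℝ That) (htau : Function.LeftInverse That tau)
include hT htau

lemma exists_contracting_iterate {α : ℝ≥0} (hα : 0 < α) {r : ℝ} (hr : 0 ≤ r)
    (h : r < (⨆ n : ℕ, sInf (Set.range fun x => |deriv (That^[n + 1]) x|) ^ ((n : ℝ) + 1)⁻¹)
      ^ (α : ℝ)) :
    ∃ N, 0 < N ∧ ∃ K : ℝ≥0, LipschitzWith K tau^[N] ∧ r ^ N * (K : ℝ) ^ (α : ℝ) < 1 := by
  have hbdd n : BddBelow (Set.range fun x => |deriv (That^[n + 1]) x|) :=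
    ⟨0, by rintro _ ⟨x, rfl⟩; exact abs_nonneg _⟩
  obtain ⟨n, hpos, hn⟩ := exists_pow_lt_rpow_of_lt_iSup
    (fun n => Real.sInf_nonneg (by rintro _ ⟨x, rfl⟩; exact abs_nonneg _)) hr hα h
  set I := sInf (Set.range fun x => |deriv (That^[n + 1]) x|)
  refine ⟨n + 1, n.succ_pos, I.toNNReal⁻¹,
    lipschitzWith_inv_of_le_abs_deriv (hT.iterate _) (htau.iterate _) (Real.toNNReal_pos.2 hpos)
      fun x => (Real.coe_toNNReal I hpos.le).trans_le (csInf_le (hbdd n) ⟨x, rfl⟩), ?_⟩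
  rw [NNReal.coe_inv, Real.coe_toNNReal I hpos.le, Real.inv_rpow hpos.le,
    mul_inv_lt_iff₀ (by positivity), one_mul]
  exact hn

theorem exists_summable_holderWith_branchTerm (hTexp : ∀ x, 1 ≤ |deriv That x|)
    {α C : ℝ≥0} (hα : 0 < α) {fhat : ℝ → ℂ} (hf : HolderWith C α fhat) {lam : ℂ}
    (hlam : ‖lam‖ <
      (⨆ n : ℕ, sInf (Set.range fun x => |deriv (That^[n + 1]) x|) ^ ((n : ℝ) + 1)⁻¹)
        ^ (α : ℝ)) :
    ∃ c : ℕ → ℝ≥0, (∀ n, HolderWith (c n) α (branchTerm tau fhat lam n)) ∧ Summable c := by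
  obtain ⟨N, hN, K, hK, hcontr⟩ := exists_contracting_iterate hT htau hα (norm_nonneg lam) hlam
  have h1 : LipschitzWith 1 tau := by
    simpa using lipschitzWith_inv_of_le_abs_deriv hT htau one_pos (by simpa using hTexp)
  refine ⟨fun n => C * (K ^ ((n + 1) / N)) ^ (α : ℝ) * ‖lam ^ (n + 1)‖₊, fun n => ?_, ?_⟩
  · have := (hf.comp (lipschitzWith_iterate_of_iterate h1 hK (n + 1)).holderWith).smul
      (lam ^ (n + 1))
    rw [mul_one] at this
    exact this
  · rw [← NNReal.summable_coe]
    refine (((summable_nat_add_iff 1).2 (summable_pow_mul_pow_div (norm_nonneg lam)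
      (by positivity) hN hcontr)).mul_left (C : ℝ)).congr fun n => ?_
    push_cast
    rw [norm_pow, Real.rpow_pow_comm K.coe_nonneg]
    ring

end Holder

/-- In the transversality setup (`T̂` a lift of a `C¹`
orientation-preserving expanding circle map of degree `d` fixing `0`, `τ = T̂⁻¹`,
`f̂` the 1-periodic lift of an `α`-Hölder function, `0 < |λ| < λ₀^α`): for all
`i, j, k ∈ Σ_d`, `h_i ≡ h_j` implies `h_{i+k} ≡ h_{j+k}` (`+` the `d`-adic addition);
consequently `G₀ = {i : h_i ≡ h_0}` is a closed subgroup of `Σ_d`. -/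
theorem stmt_5 (d : ℕ) (hd : 2 ≤ d)
    (That : ℝ → ℝ) (hTC1 : ContDiff ℝ 1 That)
    (hTdeg : ∀ x, That (x + 1) = That x + d)
    (hTexp : ∀ x, 1 < deriv That x)
    (tau : ℝ → ℝ) (htau1 : ∀ x, That (tau x) = x) (htau2 : ∀ x, tau (That x) = x)
    (α : NNReal) (hα : 0 < α)
    (fhat : ℝ → ℂ) (hfper : Function.Periodic fhat 1)
    (C : NNReal) (hfH : HolderWith C α fhat)
    (lam : ℂ)
    (hlam : ‖lam‖ <
      (⨆ n : ℕ, sInf (Set.range fun x => |deriv (That^[n + 1]) x|) ^ (((n : ℝ) + 1)⁻¹))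
        ^ (α : ℝ))
    (add : (ℕ → Fin d) → (ℕ → Fin d) → (ℕ → Fin d))
    (hadd : ∀ i j n, dVal d (add i j) n ≡ dVal d i n + dVal d j n [MOD d ^ n]) :
    (∀ i j k : ℕ → Fin d,
        hFun tau fhat lam (fun m => (i m : ℕ)) = hFun tau fhat lam (fun m => (j m : ℕ)) →
        hFun tau fhat lam (fun m => ((add i k) m : ℕ)) =
          hFun tau fhat lam (fun m => ((add j k) m : ℕ))) ∧
    (let G0 : Set (ℕ → Fin d) := {i | hFun tau fhat lam (fun m => (i m : ℕ)) =
        hFun tau fhat lam (fun _ => (0 : ℕ))};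
      IsClosed G0 ∧
      (fun _ => (⟨0, by omega⟩ : Fin d)) ∈ G0 ∧
      (∀ i ∈ G0, ∀ j ∈ G0, add i j ∈ G0) ∧
      (∀ i ∈ G0, ∀ j, add i j = (fun _ => (⟨0, by omega⟩ : Fin d)) → j ∈ G0)) := by
  have : NeZero d := ⟨by omega⟩
  have htau (x : ℝ) : tau (x + d) = tau x + 1 := by rw [← htau2 (tau x + 1), hTdeg, htau1]
  have hT : Differentiable ℝ That := hTC1.differentiable one_ne_zero
  obtain ⟨c, hg, hc⟩ := exists_summable_holderWith_branchTerm hT htau1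
    (fun x => (hTexp x).le.trans (le_abs_self _)) hα hfH hlam
  have hmain (i j k : ℕ → Fin d) (hij : hFun tau fhat lam (fun m => (i m : ℕ)) =
      hFun tau fhat lam (fun m => (j m : ℕ))) :=
    hFun_add_right_eq htau hα hg hc hfper hadd hij k
  have hzero_add j : add (fun _ => ⟨0, by omega⟩) j = j :=
    eq_of_dVal_modEq fun n => by simpa [dVal] using hadd (fun _ => ⟨0, by omega⟩) j n
  refine ⟨hmain, isClosed_eq (continuous_pi (continuous_hFun_apply htau hα hg hc))
    continuous_const, rfl, fun i hi j hj => ?_, fun i hi j hij => ?_⟩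
  · have := hmain i (fun _ => ⟨0, by omega⟩) j hi
    rw [hzero_add] at this
    exact this.trans hj
  · have := hmain i (fun _ => ⟨0, by omega⟩) j hi
    rw [hzero_add, hij] at this
    exact this.symm
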